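/- Let S be an almost unit-stabilized finite commutative unital semigroup with D(S) = D(U(S)). Then for every finite commutative unital semigroup S', D(S × S') = D(U(S) × S'). -/

import Mathlib

/-- A list (sequence) in a commutative monoid is reducible if a proper
subsequence has the same product. -/
def Reducible {M : Type*} [CommMonoid M] (A : List M) : Prop :=
  ∃ B : List M, List.Sublist B A ∧ B.length < A.length ∧ B.prod = A.prod

/-- The Davenport constant: the least positive `n` such that every sequence of
length `n` is reducible (`⊤` if none exists). -/
noncomputable def davenport (M : Type*) [CommMonoid M] : ℕ∞ :=
  sInf {k : ℕ∞ | ∃ n : ℕ, k = n ∧ 0 < n ∧ ∀ A : List M, A.length = n → Reducible A}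

/-- An ideal of a commutative monoid. -/
def IsMulIdeal {M : Type*} [CommMonoid M] (T : Set M) : Prop :=
  ∀ s t : M, t ∈ T → s * t ∈ T

/-- The relative Davenport constant `D(S, T)`: the least positive `n` such
that every sequence of length `n` with product in `T` is reducible. -/
noncomputable def davenportRel (M : Type*) [CommMonoid M] (T : Set M) : ℕ∞ :=
  sInf {k : ℕ∞ | ∃ n : ℕ, k = n ∧ 0 < n ∧
    ∀ A : List M, A.length = n → A.prod ∈ T → Reducible A}

/-- `(S, T)` is a unit-stabilized pair. -/
def UnitStabilizedPair (M : Type*) [CommMonoid M] (T : Set M) : Prop :=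
  ∀ a b : M, a * b ∉ T →
    {u : Mˣ | (u : M) * a = a} = {u : Mˣ | (u : M) * (a * b) = a * b} →
    ∃ u : Mˣ, a * b = a * u

/-!
Embedding `Sˣ × S'` into `S × S'` gives `≥`. For `≤`, let `A` be a sequence in `S × S'` of
length `D(Sˣ × S')` and let `π` be the product of its first coordinates.

If `π = 0`, a shortest subsequence whose first coordinates multiply to `0` has fewer than
`D(S) = D(Sˣ)` terms. By `D(Sˣ) + D(S') ≤ D(Sˣ × S') + 1` at least `D(S')` terms remain, and a
reduction of their second coordinates reduces `A`, the first coordinates giving `0` either way.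

If `π ≠ 0`, let `H` be the stabilizer of `π` in `Sˣ` and take a shortest subsequence `K` whose
first coordinates multiply to `p ∈ π Sˣ`. Along `K`, almost unit-stabilization makes the
stabilizers of the partial products strictly increase, which yields a zero-sum free sequence in
`H` of length `|K|`; hence `|K| < D(H)`. Every remaining term `a` satisfies `p a ∈ p Sˣ`, so it
acts on `p` like a unit, determined modulo `H`. As `D(H) + D(Sˣ/H × S') ≤ D(Sˣ × S') + 1`,
enough terms remain to reduce them in `Sˣ/H × S'`, and this reduces `A`.
-/

open List MulAction

theorem Prod.fst_list_prod {M N : Type*} [Monoid M] [Monoid N] (l : List (M × N)) :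
    l.prod.1 = (l.map Prod.fst).prod :=
  map_list_prod (MonoidHom.fst M N) l

theorem Prod.snd_list_prod {M N : Type*} [Monoid M] [Monoid N] (l : List (M × N)) :
    l.prod.2 = (l.map Prod.snd).prod :=
  map_list_prod (MonoidHom.snd M N) l

theorem List.exists_sublist_minimal_map {α β : Type*} (f : α → β) (Q : List β → Prop)
    {A : List α} (hA : Q (A.map f)) :
    ∃ K, K <+ A ∧ Q (K.map f) ∧ ∀ B, B <+ K.map f → B.length < K.length → ¬Q B := by
  obtain ⟨K, ⟨hKA, hK⟩, hmin⟩ := (InvImage.wf List.length wellFounded_lt).has_min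
    {K | K <+ A ∧ Q (K.map f)} ⟨A, .refl A, hA⟩
  refine ⟨K, hKA, hK, fun B hB hlt hQ => ?_⟩
  obtain ⟨B', hB', rfl⟩ := List.sublist_map_iff.1 hB
  exact hmin B' ⟨hB'.trans hKA, hQ⟩ (by simpa using hlt : B'.length < K.length)

theorem List.mul_prod_map_eq {α M : Type*} [CommMonoid M] (p : M) (f g : α → M) {D : List α}
    (h : ∀ a ∈ D, p * f a = p * g a) : p * (D.map f).prod = p * (D.map g).prod := by
  induction D with
  | nil => rfl
  | cons a D ih =>
    simp only [List.map_cons, List.prod_cons]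
    rw [mul_left_comm, ih fun x hx => h x (List.mem_cons_of_mem a hx), mul_left_comm,
      ← mul_assoc, h a List.mem_cons_self, mul_assoc]

theorem ENat.le_of_lt_of_add_le {ℓ c : ℕ} {d e : ℕ∞} (hd : (ℓ : ℕ∞) < d)
    (h : d + e ≤ ℓ + c + 1) : e ≤ c := by
  have hfin : d + e ≠ ⊤ := ne_top_of_le_ne_top (by simp) h
  lift d to ℕ using (WithTop.add_ne_top.1 hfin).1
  lift e to ℕ using (WithTop.add_ne_top.1 hfin).2
  norm_cast at hd h ⊢
  omega

theorem ENat.add_le_add_one_of_forall_lt {a b c : ℕ∞} (ha : 0 < a) (hb : 0 < b)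
    (h : ∀ ℓ k : ℕ, (ℓ : ℕ∞) < a → (k : ℕ∞) < b → ((ℓ + k : ℕ) : ℕ∞) < c) :
    a + b ≤ c + 1 := by
  induction c using ENat.recTopCoe with
  | top => simp
  | coe m =>
    have ha' : a ≠ ⊤ := fun ht => by
      simpa using h m 0 (ht ▸ ENat.natCast_lt_top m) (by simpa using hb)
    have hb' : b ≠ ⊤ := fun ht => by
      simpa using h 0 m (by simpa using ha) (ht ▸ ENat.natCast_lt_top m)
    lift a to ℕ using ha'
    lift b to ℕ using hb'
    norm_cast at ha hb h ⊢
    have := h (a - 1) (b - 1) (by omega) (by omega)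
    omega

section Reducible

variable {M N : Type*} [CommMonoid M] [CommMonoid N] {A B C E K : List M}

theorem not_reducible_nil : ¬Reducible ([] : List M) := by
  rintro ⟨B, -, hlt, -⟩
  simp at hlt

theorem Reducible.append_right (h : Reducible A) (C : List M) : Reducible (A ++ C) := by
  obtain ⟨B, hB, hlt, hprod⟩ := h
  exact ⟨B ++ C, hB.append (.refl C), by simpa using hlt, by simp [hprod]⟩

theorem Reducible.of_perm (hp : A.Perm B) (h : Reducible B) : Reducible A := by
  obtain ⟨B', hB', hlt, hprod⟩ := h
  obtain ⟨C, hC, hCA⟩ := hB'.subperm.trans hp.symm.subperm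
  exact ⟨C, hCA, hC.length_eq ▸ hp.length_eq ▸ hlt, hC.prod_eq ▸ hp.prod_eq ▸ hprod⟩

theorem Reducible.of_map (f : M →* N) (hf : Function.Injective f) (h : Reducible (A.map f)) :
    Reducible A := by
  obtain ⟨B, hB, hlt, hprod⟩ := h
  obtain ⟨B₀, hB₀, rfl⟩ := List.sublist_map_iff.1 hB
  exact ⟨B₀, hB₀, by simpa using hlt, hf (by simpa only [map_list_prod] using hprod)⟩

theorem List.Sublist.eq_of_not_reducible_of_prod_eq (hB : B <+ A) (hA : ¬Reducible A)
    (h : B.prod = A.prod) : B = A :=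
  hB.eq_of_length_le (not_lt.1 fun hlt => hA ⟨B, hB, hlt, h⟩)

theorem reducible_of_perm_append (hA : A.Perm (K ++ C)) (hE : E <+ C)
    (hlt : E.length < C.length) (hprod : K.prod * E.prod = K.prod * C.prod) : Reducible A :=
  .of_perm hA ⟨K ++ E, (Sublist.refl K).append hE, by simpa using hlt, by simpa using hprod⟩

end Reducible

section Davenport

variable {M N P : Type*} [CommMonoid M] [CommMonoid N] [CommMonoid P]

theorem davenport_le_iff {d : ℕ∞} :
    davenport M ≤ d ↔ ∀ A : List M, d ≤ A.length → Reducible A := by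
  constructor
  · intro hd A hA
    have hne : {k : ℕ∞ | ∃ n : ℕ, k = n ∧ 0 < n ∧
        ∀ A : List M, A.length = n → Reducible A}.Nonempty := by
      refine Set.nonempty_iff_ne_empty.2 fun he => ?_
      rw [davenport, he, sInf_empty] at hd
      exact ENat.natCast_ne_top _ (top_le_iff.1 (hd.trans hA))
    obtain ⟨n, hn, -, hred⟩ := csInf_mem hne
    have hnA : n ≤ A.length := by
      rw [davenport, hn] at hd
      exact_mod_cast hd.trans hA
    rw [← List.take_append_drop n A]
    exact (hred _ (List.length_take_of_le hnA)).append_right _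
  · intro h
    induction d using ENat.recTopCoe with
    | top => exact le_top
    | coe n =>
      have hn : 0 < n := Nat.pos_of_ne_zero fun h0 => not_reducible_nil (h [] (by simp [h0]))
      exact sInf_le ⟨n, rfl, hn, fun A hA => h A (by rw [hA])⟩

theorem reducible_of_davenport_le_length {A : List M} (h : davenport M ≤ A.length) :
    Reducible A :=
  davenport_le_iff.1 h A le_rfl

theorem lt_davenport_iff (ℓ : ℕ) :
    (ℓ : ℕ∞) < davenport M ↔ ∃ A : List M, A.length = ℓ ∧ ¬Reducible A := by
  rw [← not_le, davenport_le_iff]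
  push Not
  constructor
  · rintro ⟨A, hA, hred⟩
    refine ⟨A.take ℓ, List.length_take_of_le (by exact_mod_cast hA), fun h => hred ?_⟩
    exact List.take_append_drop ℓ A ▸ h.append_right _
  · rintro ⟨A, rfl, hred⟩
    exact ⟨A, le_rfl, hred⟩

theorem davenport_pos : 0 < davenport M := by
  simpa using (lt_davenport_iff (M := M) 0).2 ⟨[], rfl, not_reducible_nil⟩

theorem davenport_le_of_injective (f : M →* N) (hf : Function.Injective f) :
    davenport M ≤ davenport N :=
  davenport_le_iff.2 fun A hA =>
    (reducible_of_davenport_le_length (A := A.map f) (by simpa using hA)).of_map f hf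

theorem davenport_add_davenport_le (φ : M →* N) (σ : N → M) (hσ : ∀ x, φ (σ x) = x)
    (ι : P →* M) (hι : ∀ y, φ (ι y) = 1)
    (hcancel : ∀ c a b, c * ι a = c * ι b → a = b) :
    davenport N + davenport P ≤ davenport M + 1 := by
  have key (X : List N) (Y : List P) (hX : ¬Reducible X) (hY : ¬Reducible Y) :
      ¬Reducible (X.map σ ++ Y.map ι) := by
    rintro ⟨Z, hZ, hlt, hprod⟩
    obtain ⟨Z₁, Z₂, rfl, hZ₁, hZ₂⟩ := List.sublist_append_iff.1 hZ
    obtain ⟨X', hX', rfl⟩ := List.sublist_map_iff.1 hZ₁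
    obtain ⟨Y', hY', rfl⟩ := List.sublist_map_iff.1 hZ₂
    obtain rfl : X' = X := hX'.eq_of_not_reducible_of_prod_eq hX <| by
      simpa [map_list_prod, Function.comp_def, hσ, hι] using congrArg φ hprod
    obtain rfl : Y' = Y := hY'.eq_of_not_reducible_of_prod_eq hY <|
      hcancel _ _ _ (by simpa [map_list_prod] using hprod)
    simp at hlt
  refine ENat.add_le_add_one_of_forall_lt davenport_pos davenport_pos fun ℓ k hℓ hk => ?_
  obtain ⟨X, rfl, hX⟩ := (lt_davenport_iff _).1 hℓ
  obtain ⟨Y, rfl, hY⟩ := (lt_davenport_iff _).1 hk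
  exact (lt_davenport_iff _).2 ⟨_, by simp, key X Y hX hY⟩

theorem davenport_add_davenport_le_davenport_prod (G : Type*) [CommGroup G] :
    davenport G + davenport N ≤ davenport (G × N) + 1 :=
  add_comm (davenport G) _ ▸ davenport_add_davenport_le (MonoidHom.snd G N) (fun x => (1, x))
    (fun _ => rfl) (MonoidHom.inl G N) (fun _ => rfl)
    fun _ _ _ h => mul_left_cancel (congrArg Prod.fst h)

theorem davenport_subgroup_add_davenport_quotient_prod_le {G : Type*} [CommGroup G]
    (H : Subgroup G) : davenport H + davenport ((G ⧸ H) × N) ≤ davenport (G × N) + 1 :=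
  add_comm (davenport H) _ ▸ davenport_add_davenport_le ((QuotientGroup.mk' H).prodMap (.id N))
    (fun x => (x.1.out, x.2)) (fun x => Prod.ext (QuotientGroup.out_eq' x.1) rfl)
    ((MonoidHom.inl G N).comp H.subtype)
    (fun y => Prod.ext ((QuotientGroup.eq_one_iff _).2 y.2) rfl)
    fun _ _ _ h => Subtype.ext (mul_left_cancel (congrArg Prod.fst h))

end Davenport

theorem not_reducible_of_subgroup_chain {G : Type*} [CommGroup G] (H : ℕ → Subgroup G)
    (hH : Monotone H) (gs : List G)
    (hgs : ∀ i (hi : i < gs.length), gs[i] ∈ H (i + 1) ∧ gs[i] ∉ H i) : ¬Reducible gs := by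
  induction gs using List.reverseRecOn with
  | nil => exact not_reducible_nil
  | append_singleton gs g ih =>
    rintro ⟨B, hB, hlt, hprod⟩
    have hg : g ∉ H gs.length := by simpa using (hgs gs.length (by simp)).2
    have hgsH : ∀ x ∈ gs, x ∈ H gs.length := by
      intro x hx
      obtain ⟨i, hi, rfl⟩ := List.mem_iff_getElem.1 hx
      have := (hgs i (by simp; omega)).1
      rw [List.getElem_append_left hi] at this
      exact hH hi this
    obtain ⟨B₁, B₂, rfl, hB₁, hB₂⟩ := List.sublist_append_iff.1 hB
    rcases List.sublist_singleton.1 hB₂ with rfl | rfl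
    · refine hg ?_
      have hg' : g = gs.prod⁻¹ * B₁.prod := by
        simp only [List.append_nil, List.prod_append, List.prod_singleton] at hprod
        rw [hprod, inv_mul_cancel_left]
      rw [hg']
      exact mul_mem (inv_mem (list_prod_mem hgsH))
        (list_prod_mem fun x hx => hgsH x (hB₁.subset hx))
    · refine ih (fun i hi => ?_) ⟨B₁, hB₁, by simpa using hlt, by simpa using hprod⟩
      have := hgs i (by simp; omega)
      rwa [List.getElem_append_left hi] at this

section Stabilizer

variable {S S' : Type*} [CommMonoid S] [CommMonoid S']

theorem stabilizer_units_le_of_dvd {a b : S} (h : a ∣ b) :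
    stabilizer Sˣ a ≤ stabilizer Sˣ b := by
  obtain ⟨c, rfl⟩ := h
  exact le_stabilizer_smul_left a c

theorem mul_units_eq_of_mk_eq {p : S} {u w : Sˣ}
    (h : (u : Sˣ ⧸ stabilizer Sˣ p) = w) : p * u = p * w := by
  have hmem : ↑(u⁻¹ * w) * p = p := mem_stabilizer_iff.1 (QuotientGroup.eq.1 h)
  calc p * u = u * (↑(u⁻¹ * w) * p) := by rw [hmem, mul_comm]
    _ = p * w := by rw [← mul_assoc, ← Units.val_mul, mul_inv_cancel_left, mul_comm]

theorem exists_sublist_mul_fst_prod_eq {p : S} {C : List (S × S')}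
    (hC : ∀ c ∈ C, ∃ u : Sˣ, p * c.1 = p * u)
    (hlen : davenport ((Sˣ ⧸ stabilizer Sˣ p) × S') ≤ C.length) :
    ∃ E, E <+ C ∧ E.length < C.length ∧
      p * (E.map Prod.fst).prod = p * (C.map Prod.fst).prod ∧
      (E.map Prod.snd).prod = (C.map Prod.snd).prod := by
  choose! F hF using hC
  let φ : S × S' → (Sˣ ⧸ stabilizer Sˣ p) × S' := fun c => ((F c : Sˣ ⧸ _), c.2)
  obtain ⟨E', hE', hlt, hprod⟩ :=
    reducible_of_davenport_le_length (A := C.map φ) (by simpa using hlen)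
  obtain ⟨E, hE, rfl⟩ := List.sublist_map_iff.1 hE'
  have hunits : ∀ D, D <+ C → p * (D.map Prod.fst).prod = p * ((D.map F).prod : Sˣ) := by
    intro D hD
    rw [← Units.coeHom_apply, map_list_prod, List.map_map]
    exact List.mul_prod_map_eq p _ _ fun c hc => hF c (hD.subset hc)
  refine ⟨E, hE, by simpa using hlt, ?_, ?_⟩
  · rw [hunits E hE, hunits C (Sublist.refl C)]
    apply mul_units_eq_of_mk_eq
    have hmk : ((E.map F).map (QuotientGroup.mk' (stabilizer Sˣ p))).prod =
        ((C.map F).map (QuotientGroup.mk' _)).prod := by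
      simpa [Prod.fst_list_prod, Function.comp_def, φ] using congrArg Prod.fst hprod
    simpa only [← map_list_prod, QuotientGroup.mk'_apply] using hmk
  · simpa [Prod.snd_list_prod, Function.comp_def, φ] using congrArg Prod.snd hprod

end Stabilizer

section AlmostUnitStabilized

variable {S S' : Type*} [CommMonoidWithZero S] [CommMonoid S']

theorem UnitStabilizedPair.exists_eq_mul_units (hus : UnitStabilizedPair S {0}) {a b : S}
    (hab : a * b ≠ 0) (h : stabilizer Sˣ (a * b) ≤ stabilizer Sˣ a) :
    ∃ u : Sˣ, a * b = a * u :=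
  hus a b hab (Set.ext fun _ => ⟨fun hu => le_stabilizer_smul_left a b hu, fun hu => h hu⟩)

variable {L : List S}

theorem stabilizer_prod_take_mono : Monotone fun i => stabilizer Sˣ (L.take i).prod :=
  fun _ _ hij => stabilizer_units_le_of_dvd (List.take_prefix_take_left hij).sublist.prod_dvd_prod

/-- If the stabilizer did not grow at `L[j]`, then `L[j]` could be traded for a unit. -/
theorem stabilizer_prod_take_lt_succ (hus : UnitStabilizedPair S {0}) (h0 : L.prod ≠ 0)
    (hmin : ∀ B, B <+ L → B.length < L.length → ∀ u : Sˣ, B.prod ≠ L.prod * u)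
    {j : ℕ} (hj : j < L.length) :
    stabilizer Sˣ (L.take j).prod < stabilizer Sˣ (L.take (j + 1)).prod := by
  have hsucc := List.prod_take_succ L j hj
  have hdvd : (L.take (j + 1)).prod ∣ L.prod := (List.take_sublist _ _).prod_dvd_prod
  refine lt_of_le_not_ge (stabilizer_prod_take_mono j.le_succ) fun hge => ?_
  rw [hsucc] at hdvd hge
  obtain ⟨u, hu⟩ := hus.exists_eq_mul_units (ne_zero_of_dvd_ne_zero h0 hdvd) hge
  refine hmin (L.eraseIdx j) (L.eraseIdx_sublist j)
    (by rw [List.length_eraseIdx, if_pos hj]; omega) u⁻¹ ?_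
  rw [List.eraseIdx_eq_take_drop_succ, List.prod_append, ← List.prod_take_mul_prod_drop L (j + 1),
    hsucc, hu, mul_right_comm, Units.mul_inv_cancel_right]

theorem length_lt_davenport_stabilizer (hus : UnitStabilizedPair S {0}) (h0 : L.prod ≠ 0)
    (hmin : ∀ B, B <+ L → B.length < L.length → ∀ u : Sˣ, B.prod ≠ L.prod * u) :
    (L.length : ℕ∞) < davenport (stabilizer Sˣ L.prod) := by
  have hex (j : Fin L.length) : ∃ g : stabilizer Sˣ L.prod,
      (g : Sˣ) ∈ stabilizer Sˣ (L.take (j + 1)).prod ∧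
        (g : Sˣ) ∉ stabilizer Sˣ (L.take j).prod := by
    obtain ⟨g, hg, hg'⟩ := SetLike.exists_of_lt (stabilizer_prod_take_lt_succ hus h0 hmin j.2)
    have hg_top := stabilizer_units_le_of_dvd (List.take_sublist _ _).prod_dvd_prod hg
    exact ⟨⟨g, hg_top⟩, hg, hg'⟩
  choose g hg using hex
  refine (lt_davenport_iff _).2 ⟨List.ofFn g, List.length_ofFn, ?_⟩
  refine not_reducible_of_subgroup_chain
    (fun i => (stabilizer Sˣ (L.take i).prod).subgroupOf _)
    (fun _ _ hij => Subgroup.subgroupOf_mono _ (stabilizer_prod_take_mono hij)) _ fun i hi => ?_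
  simpa [Subgroup.mem_subgroupOf] using hg ⟨i, by simpa using hi⟩

theorem reducible_of_fst_prod_eq_zero {A : List (S × S')} (h0 : (A.map Prod.fst).prod = 0)
    (hlen : davenport S + davenport S' ≤ A.length + 1) : Reducible A := by
  obtain ⟨K, hKA, hK0, hmin⟩ :=
    List.exists_sublist_minimal_map Prod.fst (fun B => B.prod = 0) h0
  have hK : (K.length : ℕ∞) < davenport S := by
    refine (lt_davenport_iff _).2 ⟨K.map Prod.fst, List.length_map _, ?_⟩
    rintro ⟨B, hB, hlt, hB0⟩
    exact hmin B hB (by simpa using hlt) (hB0.trans hK0)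
  obtain ⟨C, hC⟩ := hKA.exists_perm_append
  rw [hC.length_eq, List.length_append, Nat.cast_add] at hlen
  obtain ⟨E', hE', hlt, hprod⟩ := reducible_of_davenport_le_length (A := C.map Prod.snd)
    (by simpa using ENat.le_of_lt_of_add_le hK hlen)
  obtain ⟨E, hE, rfl⟩ := List.sublist_map_iff.1 hE'
  refine reducible_of_perm_append hC hE (by simpa using hlt) (Prod.ext ?_ ?_)
  · simp [Prod.fst_list_prod, hK0]
  · simp [Prod.snd_list_prod, hprod]

theorem reducible_of_fst_prod_ne_zero (hus : UnitStabilizedPair S {0}) {A : List (S × S')}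
    (hπ : (A.map Prod.fst).prod ≠ 0)
    (hlen : davenport (stabilizer Sˣ (A.map Prod.fst).prod) +
      davenport ((Sˣ ⧸ stabilizer Sˣ (A.map Prod.fst).prod) × S') ≤ A.length + 1) :
    Reducible A := by
  set π := (A.map Prod.fst).prod
  obtain ⟨K, hKA, ⟨v, hv⟩, hmin⟩ := List.exists_sublist_minimal_map Prod.fst
    (fun B => ∃ v : Sˣ, B.prod = π * v) (A := A) ⟨1, by simp [π]⟩
  set p := (K.map Prod.fst).prod
  have hstab : stabilizer Sˣ p = stabilizer Sˣ π := by
    rw [hv, mul_comm, ← smul_eq_mul, ← Units.smul_def, stabilizer_smul_eq_right]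
  have hp0 : p ≠ 0 := by rwa [hv, Ne, Units.mul_left_eq_zero]
  have hK : (K.length : ℕ∞) < davenport (stabilizer Sˣ π) := by
    rw [← hstab, ← List.length_map Prod.fst]
    exact length_lt_davenport_stabilizer hus hp0 fun B hB hlt u hBu =>
      hmin B hB (by simpa using hlt) ⟨v * u, by rw [hBu, Units.val_mul, ← mul_assoc, ← hv]⟩
  obtain ⟨C, hC⟩ := hKA.exists_perm_append
  have hpC : p * (C.map Prod.fst).prod = π := by
    simpa using (hC.map Prod.fst).prod_eq.symm
  have hunits : ∀ c ∈ C, ∃ u : Sˣ, p * c.1 = p * u := by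
    intro c hc
    have hdvd : p * c.1 ∣ π :=
      hpC ▸ mul_dvd_mul_left p (List.dvd_prod (List.mem_map_of_mem hc))
    exact hus.exists_eq_mul_units (ne_zero_of_dvd_ne_zero hπ hdvd)
      ((stabilizer_units_le_of_dvd hdvd).trans hstab.ge)
  rw [hC.length_eq, List.length_append, Nat.cast_add] at hlen
  obtain ⟨E, hE, hlt, hfst, hsnd⟩ := exists_sublist_mul_fst_prod_eq hunits
    (by rw [hstab]; exact ENat.le_of_lt_of_add_le hK hlen)
  exact reducible_of_perm_append hC hE hlt
    (Prod.ext (by simpa [Prod.fst_list_prod]) (by simp [Prod.snd_list_prod, hsnd]))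

end AlmostUnitStabilized

theorem davenport_prod_of_delta_zero_general {S : Type*} [CommMonoidWithZero S]
    (hus : UnitStabilizedPair S ({0} : Set S))
    (hD : davenport S = davenport Sˣ)
    {S' : Type*} [CommMonoid S'] :
    davenport (S × S') = davenport (Sˣ × S') := by
  have hembed : Function.Injective ((Units.coeHom S).prodMap (MonoidHom.id S')) :=
    Prod.map_injective.2 ⟨Units.val_injective, Function.injective_id⟩
  refine le_antisymm (davenport_le_iff.2 fun A hA => ?_) (davenport_le_of_injective _ hembed)
  have hA' : davenport (Sˣ × S') + 1 ≤ A.length + 1 := by gcongr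
  by_cases h0 : (A.map Prod.fst).prod = 0
  · exact reducible_of_fst_prod_eq_zero h0
      (hD ▸ (davenport_add_davenport_le_davenport_prod Sˣ).trans hA')
  · exact reducible_of_fst_prod_ne_zero hus h0
      ((davenport_subgroup_add_davenport_quotient_prod_le _).trans hA')

theorem davenport_prod_of_delta_zero {S : Type*} [CommMonoidWithZero S] [Finite S]
    (hus : UnitStabilizedPair S ({0} : Set S))
    (hD : davenport S = davenport Sˣ)
    {S' : Type*} [CommMonoid S'] [Finite S'] :
    davenport (S × S') = davenport (Sˣ × S') :=
  davenport_prod_of_delta_zero_general hus hD
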